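/- arXiv:2405.15112 — 2 statements merged into one kernel-verified Lean document; each statement's English description precedes it below -/
import Mathlib

section
/- Let V ∈ U_a with splicing vectors u₁,…,u_{k−2} and V₂ = (v₁,…,v_a,u₁,…,u_{k−2},v_n). For any b < a and 1 ≤ i ≤ k−1, the minor of V₂ on the columns corresponding to the index set I(b,i) (in the (a+k−1)-column labeling) satisfies Δ_{I(b,i)}(V₂) = (Δ_{I(a,k−1)}(V)/Δ_{I(a,i)}(V)) · Δ_{I(b,i)}(V). -/
/-- The minor of the matrix with columns `v` on the ordered tuple of column indices `J`. -/
noncomputable def Delta (k : ℕ) (v : ℕ → Fin k → ℂ) (J : Fin k → ℕ) : ℂ :=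
  Matrix.det (Matrix.of fun r c : Fin k => v (J c) r)

/-- The ordered index tuple `I(a,i) = (a, …, a+i-1, n-k+i+1, …, n)`. -/
def Iset (k n a i : ℕ) : Fin k → ℕ :=
  fun j => if (j : ℕ) < i then a + (j : ℕ) else n - k + 1 + (j : ℕ)

/-- The tuple `I(a,i)` with the entry at position `s` replaced by `a+i`. -/
def Iprime (k n a i s : ℕ) : Fin k → ℕ :=
  fun j => if (j : ℕ) = s then a + i else Iset k n a i j

/-- Cyclic reduction of a 1-based column index modulo `n`. -/
def cyc (n b : ℕ) : ℕ := (b - 1) % n + 1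

/-- Membership in the open positroid variety: all cyclically consecutive `k × k` minors of the
matrix with `1`-indexed columns `v 1, …, v n` are nonzero. -/
def PiCirc (k n : ℕ) (v : ℕ → Fin k → ℂ) : Prop :=
  ∀ b, 1 ≤ b → b ≤ n → Delta k v (fun j => cyc n (b + (j : ℕ))) ≠ 0

/-! ### Auxiliary machinery -/

/-- The determinant as an alternating map in the rows. -/
noncomputable def dRow (k : ℕ) : (Fin k → ℂ) [⋀^Fin k]→ₗ[ℂ] ℂ :=
  Matrix.detRowAlternating

lemma Delta_eq_dRow (k : ℕ) (v : ℕ → Fin k → ℂ) (J : Fin k → ℕ) :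
    Delta k v J = dRow k (fun c => v (J c)) := by
  unfold Delta dRow
  rw [← Matrix.det_transpose]
  rfl

/-- Column (row) replacement: if one argument of the determinant differs from `x` by a linear
combination of other arguments, the determinant is unchanged by replacing it with `x`. -/
lemma det_replace {k : ℕ} (w : Fin k → Fin k → ℂ) (t : Fin k) (x : Fin k → ℂ)
    (m : ℕ) (co : ℕ → ℂ) (idx : ℕ → Fin k)
    (hw : w t = x + ∑ s ∈ Finset.range m, co s • w (idx s))
    (hidx : ∀ s < m, idx s ≠ t) :
    dRow k w = dRow k (Function.update w t x) := by
  conv_lhs => rw [← Function.update_eq_self t w, hw]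
  rw [AlternatingMap.map_update_add]
  have h0 : (dRow k) (Function.update w t (∑ s ∈ Finset.range m, co s • w (idx s))) = 0 := by
    show (dRow k).toMultilinearMap (Function.update w t
      (∑ s ∈ Finset.range m, co s • w (idx s))) = 0
    rw [(dRow k).toMultilinearMap.map_update_sum]
    refine Finset.sum_eq_zero fun s hs => ?_
    have hst : idx s ≠ t := hidx s (Finset.mem_range.mp hs)
    have : (dRow k).toMultilinearMap (Function.update w t (co s • w (idx s)))
        = (dRow k) (Function.update w t (co s • w (idx s))) := rfl
    rw [this, AlternatingMap.map_update_smul]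
    rw [(dRow k).map_eq_zero_of_eq (Function.update w t (w (idx s)))
      (i := t) (j := idx s) ?_ (Ne.symm hst), smul_zero]
    rw [Function.update_self, Function.update_of_ne hst]
  rw [h0, add_zero]

/-- Cramer's rule: the splicing vector `u_j` lies in the span of the "tail" columns, with
explicit coefficients. -/
lemma u_span (k n a j : ℕ) (v : ℕ → Fin k → ℂ) (uj : Fin k → ℂ)
    (hΔj : Delta k v (Iset k n a j) ≠ 0)
    (huj : uj = v (a + j) - ∑ s ∈ Finset.range j,
      (Delta k v (Iprime k n a j s) / Delta k v (Iset k n a j)) • v (a + s))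
    (hjk : j < k) :
    uj = ∑ c ∈ Finset.Ico j k,
      (Delta k v (Iprime k n a j c) / Delta k v (Iset k n a j)) • v (n - k + 1 + c) := by
  set Δv := Delta k v (Iset k n a j) with hΔdef
  set A : Matrix (Fin k) (Fin k) ℂ := Matrix.of fun r c : Fin k => v (Iset k n a j c) r with hA
  have hdetA : A.det = Δv := rfl
  have h1 : ∀ c : Fin k, Matrix.cramer A (v (a + j)) c = Delta k v (Iprime k n a j (c : ℕ)) := by
    intro c
    rw [Matrix.cramer_apply]
    unfold Delta
    congr 1
    ext r c'
    rw [Matrix.updateCol_apply]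
    by_cases h : c' = c
    · simp [h, Iprime, Matrix.of_apply]
    · have : (c' : ℕ) ≠ (c : ℕ) := fun hh => h (Fin.ext hh)
      simp [h, Iprime, this, hA, Matrix.of_apply]
  have key : Δv • v (a + j) = ∑ c : Fin k,
      Delta k v (Iprime k n a j (c : ℕ)) • v (Iset k n a j c) := by
    have hcr := Matrix.mulVec_cramer A (v (a + j))
    rw [hdetA] at hcr
    funext r
    have h2 := congrFun hcr r
    simp only [Matrix.mulVec, dotProduct, Pi.smul_apply, smul_eq_mul] at h2
    simp only [Finset.sum_apply, Pi.smul_apply, smul_eq_mul]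
    rw [← h2]
    refine Finset.sum_congr rfl fun c _ => ?_
    rw [h1 c, hA]
    simp [Matrix.of_apply, mul_comm]
  have key2 : v (a + j) = ∑ c ∈ Finset.range k,
      (Delta k v (Iprime k n a j c) / Δv) •
        v (if c < j then a + c else n - k + 1 + c) := by
    have := congrArg (fun x => Δv⁻¹ • x) key
    simp only [smul_smul, inv_mul_cancel₀ hΔj, one_smul, Finset.smul_sum] at this
    rw [this]
    rw [← Fin.sum_univ_eq_sum_range (fun c =>
      (Delta k v (Iprime k n a j c) / Δv) • v (if c < j then a + c else n - k + 1 + c)) k]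
    refine Finset.sum_congr rfl fun c _ => ?_
    have hv : v (Iset k n a j c) =
        v (if (c : ℕ) < j then a + (c : ℕ) else n - k + 1 + (c : ℕ)) := by
      simp [Iset]
    rw [hv, div_eq_inv_mul]
  rw [huj, key2]
  rw [Finset.range_eq_Ico, ← Finset.sum_Ico_consecutive _ (Nat.zero_le j) (le_of_lt hjk)]
  have hh : ∀ c ∈ Finset.Ico 0 j,
      (Delta k v (Iprime k n a j c) / Δv) • v (if c < j then a + c else n - k + 1 + c)
      = (Delta k v (Iprime k n a j c) / Δv) • v (a + c) := by
    intro c hc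
    rw [if_pos (Finset.mem_Ico.mp hc).2]
  rw [Finset.sum_congr rfl hh, ← Finset.range_eq_Ico, add_sub_cancel_left]
  refine Finset.sum_congr rfl fun c hc => ?_
  have hjc := (Finset.mem_Ico.mp hc).1
  rw [if_neg (by omega)]

lemma Iprime_self (k n a j : ℕ) : Iprime k n a j j = Iset k n a (j + 1) := by
  funext c
  simp only [Iprime, Iset]
  by_cases h : (c : ℕ) = j
  · rw [if_pos h, if_pos (by omega)]
    omega
  · rw [if_neg h]
    by_cases h2 : (c : ℕ) < j
    · rw [if_pos h2, if_pos (by omega)]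
    · rw [if_neg h2, if_neg (by omega)]

/-- The family of columns after replacing the tail `u`-columns below index `j` by `v`-columns. -/
def FamD (k n b i : ℕ) (v u : ℕ → Fin k → ℂ) (j : ℕ) : Fin k → Fin k → ℂ :=
  fun c => if (c : ℕ) < i then v (b + (c : ℕ))
    else if (c : ℕ) < j then u (c : ℕ) else v (n - k + 1 + (c : ℕ))

/-- The family of columns after replacing head `u`-columns up to column `a+m` by `v`-columns. -/
def HamD (k n a b i : ℕ) (v u : ℕ → Fin k → ℂ) (m : ℕ) : Fin k → Fin k → ℂ :=
  fun c => if (c : ℕ) < i then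
      (if b + (c : ℕ) ≤ a + m then v (b + (c : ℕ)) else u (b + (c : ℕ) - a))
    else if (c : ℕ) < k - 1 then u (c : ℕ) else v (n - k + 1 + (c : ℕ))

lemma fam_step (k n a b i j : ℕ) (v u : ℕ → Fin k → ℂ)
    (hi : 1 ≤ i) (hij : i ≤ j) (hjk : j + 1 ≤ k - 1) (hk : 2 ≤ k)
    (hΔj : Delta k v (Iset k n a j) ≠ 0)
    (huj : u j = v (a + j) - ∑ s ∈ Finset.range j,
      (Delta k v (Iprime k n a j s) / Delta k v (Iset k n a j)) • v (a + s)) :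
    dRow k (FamD k n b i v u (j + 1)) =
      (Delta k v (Iset k n a (j + 1)) / Delta k v (Iset k n a j)) *
        dRow k (FamD k n b i v u j) := by
  have hjk' : j < k := by omega
  set t : Fin k := ⟨j, hjk'⟩ with ht
  set β : ℂ := Delta k v (Iset k n a (j + 1)) / Delta k v (Iset k n a j) with hβ
  set idx : ℕ → Fin k := fun s => if h : j + 1 + s < k then ⟨j + 1 + s, h⟩ else t with hidxdef
  have hspan := u_span k n a j v (u j) hΔj huj hjk'
  have hw : FamD k n b i v u (j + 1) t = (β • v (n - k + 1 + j)) +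
      ∑ s ∈ Finset.range (k - (j + 1)),
        (Delta k v (Iprime k n a j (j + 1 + s)) / Delta k v (Iset k n a j)) •
          FamD k n b i v u (j + 1) (idx s) := by
    have h1 : FamD k n b i v u (j + 1) t = u j := by
      simp only [FamD, ht]
      rw [if_neg (by omega), if_pos (by omega)]
    rw [h1, hspan]
    rw [Finset.sum_eq_sum_Ico_succ_bot hjk']
    congr 1
    · rw [Iprime_self]
    · rw [Finset.sum_Ico_eq_sum_range]
      refine Finset.sum_congr rfl fun s hs => ?_
      have hs' : s < k - (j + 1) := Finset.mem_range.mp hs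
      congr 1
      have hidx : idx s = ⟨j + 1 + s, by omega⟩ := by
        simp only [hidxdef]
        rw [dif_pos (by omega)]
      rw [hidx]
      simp only [FamD]
      rw [if_neg (by omega), if_neg (by omega)]
  have hidxne : ∀ s < k - (j + 1), idx s ≠ t := by
    intro s hs
    simp only [hidxdef]
    rw [dif_pos (by omega)]
    intro h
    have := congrArg Fin.val h
    simp only [ht, Fin.val_mk] at this
    omega
  have hrep := det_replace (FamD k n b i v u (j + 1)) t (β • v (n - k + 1 + j))
    (k - (j + 1)) (fun s => Delta k v (Iprime k n a j (j + 1 + s)) / Delta k v (Iset k n a j))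
    idx hw hidxne
  have hupd : Function.update (FamD k n b i v u (j + 1)) t (v (n - k + 1 + j)) =
      FamD k n b i v u j := by
    funext c
    by_cases h : c = t
    · subst h
      rw [Function.update_self]
      simp only [FamD, ht]
      rw [if_neg (by omega), if_neg (by omega)]
    · rw [Function.update_of_ne h]
      have hne : (c : ℕ) ≠ j := fun hh => h (Fin.ext hh)
      simp only [FamD]
      by_cases h1 : (c : ℕ) < i
      · rw [if_pos h1, if_pos h1]
      · rw [if_neg h1, if_neg h1]
        by_cases h2 : (c : ℕ) < j
        · rw [if_pos h2, if_pos (by omega)]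
        · rw [if_neg h2, if_neg (by omega)]
  rw [hrep, ← hupd]
  rw [show Function.update (FamD k n b i v u (j + 1)) t (β • v (n - k + 1 + j)) =
      Function.update (FamD k n b i v u (j + 1)) t (β • (v (n - k + 1 + j))) from rfl]
  rw [AlternatingMap.map_update_smul]
  rw [smul_eq_mul]

lemma ham_step (k n a b i m : ℕ) (v u : ℕ → Fin k → ℂ)
    (hb : 1 ≤ b) (hba : b < a) (hik : i ≤ k - 1) (hk : 2 ≤ k)
    (hum : a + m + 1 - b < i →
      u (m + 1) = v (a + (m + 1)) - ∑ s ∈ Finset.range (m + 1),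
        (Delta k v (Iprime k n a (m + 1) s) / Delta k v (Iset k n a (m + 1))) • v (a + s)) :
    dRow k (HamD k n a b i v u m) = dRow k (HamD k n a b i v u (m + 1)) := by
  by_cases hpos : a + m + 1 - b < i
  · set t : Fin k := ⟨a + m + 1 - b, by omega⟩ with ht
    set idx : ℕ → Fin k := fun s => if h : a + s - b < k then ⟨a + s - b, h⟩ else t with hidxdef
    have hw : HamD k n a b i v u m t = v (a + (m + 1)) +
        ∑ s ∈ Finset.range (m + 1),
          (-(Delta k v (Iprime k n a (m + 1) s) / Delta k v (Iset k n a (m + 1)))) •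
            HamD k n a b i v u m (idx s) := by
      have h1 : HamD k n a b i v u m t = u (m + 1) := by
        simp only [HamD, ht, Fin.val_mk]
        rw [if_pos (by omega), if_neg (by omega)]
        exact congrArg _ (by omega)
      rw [h1, hum hpos, sub_eq_add_neg, ← Finset.sum_neg_distrib]
      congr 1
      refine Finset.sum_congr rfl fun s hs => ?_
      have hs' : s < m + 1 := Finset.mem_range.mp hs
      have hidx : idx s = ⟨a + s - b, by omega⟩ := by
        simp only [hidxdef]
        rw [dif_pos (by omega)]
      have hv : HamD k n a b i v u m (idx s) = v (a + s) := by
        rw [hidx]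
        simp only [HamD, Fin.val_mk]
        rw [if_pos (by omega), if_pos (by omega)]
        exact congrArg _ (by omega)
      rw [hv, neg_smul]
    have hidxne : ∀ s < m + 1, idx s ≠ t := by
      intro s hs
      simp only [hidxdef]
      rw [dif_pos (by omega)]
      intro h
      have := congrArg Fin.val h
      simp only [ht, Fin.val_mk] at this
      omega
    have hrep := det_replace (HamD k n a b i v u m) t (v (a + (m + 1))) (m + 1)
      (fun s => -(Delta k v (Iprime k n a (m + 1) s) / Delta k v (Iset k n a (m + 1))))
      idx hw hidxne
    rw [hrep]
    congr 1
    funext c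
    by_cases h : c = t
    · subst h
      rw [Function.update_self]
      simp only [HamD, ht, Fin.val_mk]
      rw [if_pos (by omega), if_pos (by omega)]
      exact congrArg _ (by omega)
    · rw [Function.update_of_ne h]
      have hne : (c : ℕ) ≠ a + m + 1 - b := fun hh => h (Fin.ext hh)
      simp only [HamD]
      by_cases h1 : (c : ℕ) < i
      · rw [if_pos h1, if_pos h1]
        by_cases h2 : b + (c : ℕ) ≤ a + m
        · rw [if_pos h2, if_pos (by omega)]
        · rw [if_neg h2, if_neg (by omega)]
      · rw [if_neg h1, if_neg h1]
  · congr 1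
    funext c
    simp only [HamD]
    by_cases h1 : (c : ℕ) < i
    · rw [if_pos h1, if_pos h1]
      by_cases h2 : b + (c : ℕ) ≤ a + m
      · rw [if_pos h2, if_pos (by omega)]
      · rw [if_neg h2, if_neg (by omega)]
    · rw [if_neg h1, if_neg h1]

/-- For `b < a` and `1 ≤ i ≤ k-1`, the Scott minor of `V₂` on `I(b,i)` equals
`(Δ_{I(a,k-1)}(V)/Δ_{I(a,i)}(V)) · Δ_{I(b,i)}(V)`. -/
theorem V2_scott_minor (k n a : ℕ)
    (hk : 2 ≤ k) (hn : k + 2 ≤ n) (h2a : 2 ≤ a) (han : a ≤ n - k)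
    (v : ℕ → Fin k → ℂ)
    (hΔ : ∀ i, 1 ≤ i → i ≤ k - 1 → Delta k v (Iset k n a i) ≠ 0)
    (u : ℕ → Fin k → ℂ)
    (hu : ∀ i, 1 ≤ i → i ≤ k - 2 → u i = v (a + i) -
      ∑ s ∈ Finset.range i,
        (Delta k v (Iprime k n a i s) / Delta k v (Iset k n a i)) • v (a + s))
    (v2 : ℕ → Fin k → ℂ)
    (hv2 : ∀ m, 1 ≤ m → m ≤ a + k - 1 →
      v2 m = if m ≤ a then v m else if m ≤ a + k - 2 then u (m - a) else v n) :
    ∀ b i, 1 ≤ b → b < a → 1 ≤ i → i ≤ k - 1 →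
      Delta k v2 (Iset k (a + k - 1) b i) =
        Delta k v (Iset k n a (k - 1)) / Delta k v (Iset k n a i) *
          Delta k v (Iset k n b i) := by
  intro b i hb hba hi hik
  have claim2 : ∀ j, i ≤ j → j ≤ k - 1 →
      dRow k (FamD k n b i v u j) =
        Delta k v (Iset k n a j) / Delta k v (Iset k n a i) * dRow k (FamD k n b i v u i) := by
    intro j hj
    induction j, hj using Nat.le_induction with
    | base => intro _; rw [div_self (hΔ i hi hik), one_mul]
    | succ j hij IH =>
      intro hjk1
      have h1 := fam_step k n a b i j v u hi hij hjk1 hk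
        (hΔ j (by omega) (by omega)) (hu j (by omega) (by omega))
      rw [h1, IH (by omega)]
      have hΔj := hΔ j (by omega) (by omega)
      have hΔi := hΔ i hi hik
      field_simp
  have claim1 : ∀ m, m ≤ i → dRow k (HamD k n a b i v u 0) = dRow k (HamD k n a b i v u m) := by
    intro m hm
    induction m with
    | zero => rfl
    | succ m IH =>
      rw [IH (by omega)]
      exact ham_step k n a b i m v u hb hba hik hk
        (fun hlt => hu (m + 1) (by omega) (by omega))
  have e1 : Delta k v2 (Iset k (a + k - 1) b i) = dRow k (HamD k n a b i v u 0) := by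
    rw [Delta_eq_dRow]
    congr 1
    funext c
    have hck := c.isLt
    by_cases h1 : (c : ℕ) < i
    · simp only [Iset, if_pos h1]
      rw [hv2 (b + (c : ℕ)) (by omega) (by omega)]
      simp only [HamD, if_pos h1]
      by_cases h3 : b + (c : ℕ) ≤ a
      · rw [if_pos h3, if_pos (by omega)]
      · rw [if_neg h3, if_pos (by omega), if_neg (by omega)]
    · simp only [Iset, if_neg h1]
      have h2 : a + k - 1 - k + 1 + (c : ℕ) = a + (c : ℕ) := by omega
      rw [h2, hv2 (a + (c : ℕ)) (by omega) (by omega)]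
      rw [if_neg (by omega)]
      simp only [HamD, if_neg h1]
      by_cases h3 : (c : ℕ) < k - 1
      · rw [if_pos (by omega), if_pos h3]
        exact congrArg _ (by omega)
      · rw [if_neg (by omega), if_neg h3]
        exact congrArg _ (by omega)
  have e2 : HamD k n a b i v u i = FamD k n b i v u (k - 1) := by
    funext c
    simp only [HamD, FamD]
    by_cases h1 : (c : ℕ) < i
    · rw [if_pos h1, if_pos h1, if_pos (by omega)]
    · rw [if_neg h1, if_neg h1]
  have e3 : dRow k (FamD k n b i v u i) = Delta k v (Iset k n b i) := by
    rw [Delta_eq_dRow]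
    congr 1
    funext c
    simp only [FamD, Iset]
    by_cases h1 : (c : ℕ) < i
    · rw [if_pos h1, if_pos h1]
    · rw [if_neg h1, if_neg h1, if_neg h1]
  rw [e1, claim1 i (le_refl i), e2, claim2 (k - 1) (by omega) (le_refl _), e3]
end

section
/- The map Φ_a : V ↦ (V₁, V₂) is a bijection from U_a = {V ∈ Π°_{k,n} : Δ_{I(a,i)}(V) ≠ 0 for 1 ≤ i ≤ k−1} (modulo row operations, i.e. as a subset of the Grassmannian) onto Π°_{k,n−a+1} × Π°_{k,a+k−1} (each factor modulo row operations). The inverse reconstructs V by choosing the representative of V₂ whose columns a through a+k−1 are (v_a, u₁, …, u_{k−2}, v_n) computed from V₁. -/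
/-- The splicing vector `u_i = v_{a+i} - Σ_s (Δ_{I'(a,s,i)}/Δ_{I(a,i)}) v_{a+s}`. -/
noncomputable def uvec (k n a : ℕ) (v : ℕ → Fin k → ℂ) (i : ℕ) : Fin k → ℂ :=
  v (a + i) - ∑ s ∈ Finset.range i,
    (Delta k v (Iprime k n a i s) / Delta k v (Iset k n a i)) • v (a + s)

/-- The open subset `U_a ⊂ Π°_{k,n}`. -/
def Ua (k n a : ℕ) (v : ℕ → Fin k → ℂ) : Prop :=
  PiCirc k n v ∧ ∀ i, 1 ≤ i → i ≤ k - 1 → Delta k v (Iset k n a i) ≠ 0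

/-- The columns of `V₁ = (v_a, …, v_n)`. -/
def V1col (k a : ℕ) (v : ℕ → Fin k → ℂ) : ℕ → Fin k → ℂ := fun m => v (a - 1 + m)

/-- The columns of `V₂ = (v₁, …, v_a, u₁, …, u_{k-2}, v_n)`. -/
noncomputable def V2col (k n a : ℕ) (v : ℕ → Fin k → ℂ) : ℕ → Fin k → ℂ :=
  fun m => if m ≤ a then v m else if m ≤ a + k - 2 then uvec k n a v (m - a) else v n

/-- Two matrices (given by their 1-indexed columns) differ by a row operation. -/
def RowEquiv (k m : ℕ) (v w : ℕ → Fin k → ℂ) : Prop :=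
  ∃ A : GL (Fin k) ℂ, ∀ j, 1 ≤ j → j ≤ m →
    v j = (A : Matrix (Fin k) (Fin k) ℂ).mulVec (w j)


open Matrix
open Fin.NatCast

open Function in
/-- determinant of the matrix whose columns are `c`. -/
noncomputable def Dv (k : ℕ) (c : Fin k → Fin k → ℂ) : ℂ :=
  Matrix.det (Matrix.of fun r j : Fin k => c j r)

lemma Delta_Dv (k : ℕ) (v : ℕ → Fin k → ℂ) (J : Fin k → ℕ) :
    Delta k v J = Dv k (fun j => v (J j)) := rfl

lemma Dv_eq_det_row (k : ℕ) (c : Fin k → Fin k → ℂ) :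
    Dv k c = Matrix.detRowAlternating (R := ℂ) (n := Fin k) (Matrix.of c) := by
  rw [Dv, ← Matrix.det_transpose]
  rfl

lemma Dv_alt (k : ℕ) (c : Fin k → Fin k → ℂ) :
    Dv k c = (Matrix.detRowAlternating : (Fin k → ℂ) [⋀^Fin k]→ₗ[ℂ] ℂ) c :=
  Dv_eq_det_row k c

lemma Dv_zero_of_eq {k : ℕ} (c : Fin k → Fin k → ℂ) {p q : Fin k}
    (h : c p = c q) (hpq : p ≠ q) : Dv k c = 0 := by
  rw [Dv_alt]
  exact AlternatingMap.map_eq_zero_of_eq _ c h hpq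

lemma Dv_update_add {k : ℕ} (c : Fin k → Fin k → ℂ) (p : Fin k) (x y : Fin k → ℂ) :
    Dv k (Function.update c p (x + y)) =
      Dv k (Function.update c p x) + Dv k (Function.update c p y) := by
  simp only [Dv_alt]
  exact (Matrix.detRowAlternating : (Fin k → ℂ) [⋀^Fin k]→ₗ[ℂ] ℂ).toMultilinearMap.map_update_add c p x y

lemma Dv_update_smul {k : ℕ} (c : Fin k → Fin k → ℂ) (p : Fin k) (e : ℂ) (x : Fin k → ℂ) :
    Dv k (Function.update c p (e • x)) = e * Dv k (Function.update c p x) := by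
  simp only [Dv_alt]
  rw [show ((Matrix.detRowAlternating : (Fin k → ℂ) [⋀^Fin k]→ₗ[ℂ] ℂ) (Function.update c p (e • x)) : ℂ)
      = e • (Matrix.detRowAlternating : (Fin k → ℂ) [⋀^Fin k]→ₗ[ℂ] ℂ) (Function.update c p x) from
    (Matrix.detRowAlternating : (Fin k → ℂ) [⋀^Fin k]→ₗ[ℂ] ℂ).toMultilinearMap.map_update_smul c p e x]
  simp [smul_eq_mul]

lemma Dv_update_zero {k : ℕ} (c : Fin k → Fin k → ℂ) (p : Fin k) :
    Dv k (Function.update c p 0) = 0 := by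
  simp only [Dv_alt]
  exact (Matrix.detRowAlternating : (Fin k → ℂ) [⋀^Fin k]→ₗ[ℂ] ℂ).toMultilinearMap.map_update_zero c p

lemma Dv_update_span {k : ℕ} (c : Fin k → Fin k → ℂ) (p : Fin k) {x : Fin k → ℂ}
    (hx : x ∈ Submodule.span ℂ {y | ∃ q, q ≠ p ∧ y = c q}) :
    Dv k (Function.update c p x) = 0 := by
  induction hx using Submodule.span_induction with
  | mem y hy =>
      obtain ⟨q, hq, rfl⟩ := hy
      refine Dv_zero_of_eq _ (p := p) (q := q) ?_ (Ne.symm hq)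
      rw [Function.update_self, Function.update_of_ne hq]
  | zero => exact Dv_update_zero c p
  | add x y hx hy ihx ihy => rw [Dv_update_add, ihx, ihy, add_zero]
  | smul e x hx ih => rw [Dv_update_smul, ih, mul_zero]

lemma Dv_reduce {k : ℕ} (c : Fin k → Fin k → ℂ) (p : Fin k) (e : ℂ) (y w : Fin k → ℂ)
    (hw : w ∈ Submodule.span ℂ {z | ∃ q, q ≠ p ∧ z = c q})
    (hc : c p = e • y + w) :
    Dv k c = e * Dv k (Function.update c p y) := by
  conv_lhs => rw [← Function.update_eq_self p c, hc]
  rw [Dv_update_add, Dv_update_smul, Dv_update_span c p hw, add_zero]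


/-- Sequential column reduction. -/
lemma Dv_gen {k : ℕ} (c d : Fin k → Fin k → ℂ) (e : Fin k → ℂ) (ρ : Fin k → ℕ)
    (hinj : Function.Injective ρ) (hρ : ∀ p, ρ p < k)
    (hcol : ∀ p, ∃ w ∈ Submodule.span ℂ {z | ∃ q, ρ q < ρ p ∧ z = d q},
      c p = e p • d p + w) :
    Dv k c = (∏ p, e p) * Dv k d := by
  set ct : ℕ → (Fin k → Fin k → ℂ) := fun t p => if ρ p < t then d p else c p with hct
  have key : ∀ t, Dv k c = (∏ p ∈ Finset.univ.filter (fun p => ρ p < t), e p) * Dv k (ct t) := by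
    intro t
    induction t with
    | zero => simp [hct]
    | succ t ih =>
        by_cases hex : ∃ p, ρ p = t
        · obtain ⟨p, hp⟩ := hex
          have hstep : ct t = Function.update (ct (t+1)) p (c p) := by
            funext q
            by_cases hq : q = p
            · subst hq; simp [hct, hp, Function.update_self]
            · rw [Function.update_of_ne hq]
              have : ρ q ≠ t := fun h => hq (hinj (h.trans hp.symm))
              simp only [hct]
              by_cases h1 : ρ q < t
              · rw [if_pos h1, if_pos (by omega)]
              · rw [if_neg h1, if_neg (by omega)]
          obtain ⟨w, hw, hcp⟩ := hcol p
          have hred : Dv k (ct t) = e p * Dv k (Function.update (Function.update (ct (t+1)) p (c p)) p (d p)) := by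
            rw [hstep]
            refine Dv_reduce _ p (e p) (d p) w ?_ (by rw [Function.update_self]; exact hcp)
            refine Submodule.span_mono ?_ (by rw [hp] at hw; exact hw)
            rintro z ⟨q, hq, rfl⟩
            have hqp : q ≠ p := fun h => by subst h; omega
            refine ⟨q, hqp, ?_⟩
            rw [Function.update_of_ne hqp]
            simp only [hct]
            rw [if_pos (by omega)]
          have hupd : Function.update (Function.update (ct (t+1)) p (c p)) p (d p) = ct (t+1) := by
            rw [Function.update_idem]
            funext q
            by_cases hq : q = p
            · subst hq; rw [Function.update_self]; simp only [hct]; rw [if_pos (by omega)]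
            · rw [Function.update_of_ne hq]
          have hfil : Finset.univ.filter (fun q => ρ q < t + 1)
              = insert p (Finset.univ.filter (fun q => ρ q < t)) := by
            ext q
            simp only [Finset.mem_filter, Finset.mem_univ, true_and, Finset.mem_insert]
            constructor
            · intro h
              by_cases hq : q = p
              · exact Or.inl hq
              · right; have : ρ q ≠ t := fun hh => hq (hinj (hh.trans hp.symm)); omega
            · rintro (rfl | h)
              · omega
              · omega
          rw [hfil, Finset.prod_insert (by simp; omega), ih, hred, hupd]
          ring
        · push_neg at hex
          have h1 : ct (t+1) = ct t := by
            funext q; simp only [hct]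
            have := hex q
            by_cases h : ρ q < t
            · rw [if_pos (by omega), if_pos h]
            · rw [if_neg (by omega), if_neg h]
          have h2 : Finset.univ.filter (fun q => ρ q < t + 1) = Finset.univ.filter (fun q => ρ q < t) := by
            ext q; simp only [Finset.mem_filter, Finset.mem_univ, true_and]
            have := hex q; omega
          rw [h2, h1]; exact ih
  have hfin := key k
  have h1 : Finset.univ.filter (fun p : Fin k => ρ p < k) = Finset.univ := by
    ext p; simp [hρ p]
  have h2 : ct k = d := by
    funext p; simp only [hct]; rw [if_pos (hρ p)]
  rw [h1, h2] at hfin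
  exact hfin

/-- permutation of columns -/
lemma Dv_perm {k : ℕ} (c : Fin k → Fin k → ℂ) (σ : Equiv.Perm (Fin k)) :
    Dv k (fun j => c (σ j)) = ((Equiv.Perm.sign σ : ℤ) : ℂ) * Dv k c := by
  have h := Matrix.det_permute σ (Matrix.of (fun j r : Fin k => c j r))
  rw [Dv, Dv, ← Matrix.det_transpose, ← Matrix.det_transpose (Matrix.of fun r j : Fin k => c j r)]
  have e1 : (Matrix.of fun r j : Fin k => c (σ j) r)ᵀ
      = (Matrix.of (fun j r : Fin k => c j r)).submatrix σ id := by
    ext i j; rfl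
  have e2 : (Matrix.of fun r j : Fin k => c j r)ᵀ = Matrix.of (fun j r : Fin k => c j r) := by
    ext i j; rfl
  rw [e1, e2, h]

lemma Dv_perm_ne {k : ℕ} (c : Fin k → Fin k → ℂ) (σ : Equiv.Perm (Fin k)) :
    Dv k (fun j => c (σ j)) ≠ 0 ↔ Dv k c ≠ 0 := by
  rw [Dv_perm]
  have : ((Equiv.Perm.sign σ : ℤ) : ℂ) ≠ 0 := by
    rcases Int.units_eq_one_or (Equiv.Perm.sign σ) with h | h <;> rw [h] <;> norm_num
  simp [this]

/-- Cramer / basis expansion -/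
lemma Dv_basis_expand {k : ℕ} (c : Fin k → Fin k → ℂ) (hc : Dv k c ≠ 0) (x : Fin k → ℂ) :
    x = ∑ p, (Dv k (Function.update c p x) / Dv k c) • c p := by
  classical
  set M : Matrix (Fin k) (Fin k) ℂ := (Matrix.of (fun j r : Fin k => c j r))ᵀ with hM
  have hdet : M.det = Dv k c := by
    rw [hM, Matrix.det_transpose, ← Matrix.det_transpose (Matrix.of fun j r : Fin k => c j r)]
    rfl
  have hcram := Matrix.mulVec_cramer M x
  -- M *ᵥ y = ∑ p, y p • c p
  have hmv : ∀ y : Fin k → ℂ, M *ᵥ y = ∑ p, y p • c p := by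
    intro y
    funext r
    simp only [Matrix.mulVec, dotProduct, hM, Matrix.transpose_apply, Matrix.of_apply,
      Finset.sum_apply, Pi.smul_apply, smul_eq_mul]
    exact Finset.sum_congr rfl fun p _ => mul_comm _ _
  have hcolumn : ∀ p, M.cramer x p = Dv k (Function.update c p x) := by
    intro p
    rw [Matrix.cramer_apply]
    have : M.updateCol p x = (Matrix.of (fun j r : Fin k => Function.update c p x j r))ᵀ := by
      ext r j
      by_cases hj : j = p
      · subst hj; simp [Matrix.updateCol_self, Function.update_self]
      · simp [Matrix.updateCol_ne hj, Function.update_of_ne hj, hM]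
    rw [this, Matrix.det_transpose,
      ← Matrix.det_transpose (Matrix.of fun j r : Fin k => Function.update c p x j r)]
    rfl
  calc x = (Dv k c)⁻¹ • (M *ᵥ M.cramer x) := by
        rw [hcram, hdet, smul_smul, inv_mul_cancel₀ hc, one_smul]
    _ = ∑ p, (Dv k (Function.update c p x) / Dv k c) • c p := by
        rw [hmv, Finset.smul_sum]
        refine Finset.sum_congr rfl fun p _ => ?_
        rw [hcolumn p, smul_smul, div_eq_inv_mul, mul_comm (Dv k c)⁻¹]


/-- `Delta` only depends on the values of the columns at the indices used. -/
lemma Delta_congr {k : ℕ} {v v' : ℕ → Fin k → ℂ} {J J' : Fin k → ℕ}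
    (h : ∀ j, v (J j) = v' (J' j)) : Delta k v J = Delta k v' J' := by
  unfold Delta
  congr 1
  ext r c
  rw [Matrix.of_apply, Matrix.of_apply, h c]

lemma Delta_mulVec {k : ℕ} (A : Matrix (Fin k) (Fin k) ℂ) (v : ℕ → Fin k → ℂ) (J : Fin k → ℕ) :
    Delta k (fun m => A *ᵥ v m) J = A.det * Delta k v J := by
  have hM : (Matrix.of fun r c : Fin k => (A *ᵥ v (J c)) r)
      = A * (Matrix.of fun r c : Fin k => v (J c) r) := by
    ext r c
    simp [Matrix.mul_apply, Matrix.mulVec, dotProduct]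
  unfold Delta
  rw [hM, Matrix.det_mul]

/-- uvec only reads columns with index ≥ a (and within the used set). -/
lemma uvec_congr {k n a : ℕ} {v v' : ℕ → Fin k → ℂ} (i : ℕ)
    (hik : i ≤ k - 2) (hk : 2 ≤ k) (han : a + k ≤ n)
    (h : ∀ m, a ≤ m → m ≤ n → v m = v' m) :
    uvec k n a v i = uvec k n a v' i := by
  have hIset : ∀ i' (j : Fin k), i' ≤ k - 1 → a ≤ Iset k n a i' j ∧ Iset k n a i' j ≤ n := by
    intro i' j hi'
    have hj := j.isLt
    unfold Iset
    split <;> omega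
  have hD : ∀ i', i' ≤ k - 1 → Delta k v (Iset k n a i') = Delta k v' (Iset k n a i') := by
    intro i' hi'
    exact Delta_congr (fun j => h _ (hIset i' j hi').1 (hIset i' j hi').2)
  have hD' : ∀ s, s < i → Delta k v (Iprime k n a i s) = Delta k v' (Iprime k n a i s) := by
    intro s hs
    refine Delta_congr (fun j => ?_)
    have hj := j.isLt
    unfold Iprime
    split
    · exact h _ (by omega) (by omega)
    · exact h _ (hIset i j (by omega)).1 (hIset i j (by omega)).2
  unfold uvec
  rw [h _ (by omega) (by omega), hD i (by omega)]
  congr 1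
  refine Finset.sum_congr rfl fun s hs => ?_
  simp only [Finset.mem_range] at hs
  rw [hD' s hs, h _ (by omega) (by omega)]

/-- GL-equivariance of uvec. -/
lemma uvec_equivariant {k n a : ℕ} (A : Matrix (Fin k) (Fin k) ℂ) (hA : A.det ≠ 0)
    (v : ℕ → Fin k → ℂ) (i : ℕ) :
    uvec k n a (fun m => A *ᵥ v m) i = A *ᵥ uvec k n a v i := by
  unfold uvec
  rw [Matrix.mulVec_sub]
  congr 1
  rw [show (A *ᵥ ∑ s ∈ Finset.range i,
      (Delta k v (Iprime k n a i s) / Delta k v (Iset k n a i)) • v (a + s))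
      = ∑ s ∈ Finset.range i, A *ᵥ ((Delta k v (Iprime k n a i s) / Delta k v (Iset k n a i)) • v (a + s)) from by
    simpa only [Matrix.mulVecLin_apply] using
      map_sum (Matrix.mulVecLin A) (fun s => (Delta k v (Iprime k n a i s) / Delta k v (Iset k n a i)) • v (a + s)) (Finset.range i)]
  refine Finset.sum_congr rfl fun s hs => ?_
  rw [Delta_mulVec, Delta_mulVec, Matrix.mulVec_smul]
  congr 1
  rw [mul_div_mul_left _ _ hA]

set_option maxHeartbeats 1600000 in
/-- Tail-span structure of uvec. -/
lemma uvec_tail {k n a : ℕ} (v : ℕ → Fin k → ℂ) (i : ℕ) (hk : 2 ≤ k)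
    (hi1 : 1 ≤ i) (hik : i ≤ k - 2)
    (hI : Delta k v (Iset k n a i) ≠ 0) :
    ∃ e : ℕ → ℂ, uvec k n a v i =
      (Delta k v (Iset k n a (i+1)) / Delta k v (Iset k n a i)) • v (n - k + 1 + i) +
      ∑ t ∈ Finset.Ico (i+1) k, e t • v (n - k + 1 + t) := by
  classical
  set c : Fin k → Fin k → ℂ := fun j => v (Iset k n a i j) with hc
  have hDc : Dv k c = Delta k v (Iset k n a i) := (Delta_Dv k v _).symm
  have hc0 : Dv k c ≠ 0 := by rw [hDc]; exact hI
  set x : Fin k → ℂ := v (a + i) with hx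
  have hexp := Dv_basis_expand c hc0 x
  -- the update tuples
  have hupd_lt : ∀ p : Fin k, (p : ℕ) < i →
      Dv k (Function.update c p x) = Delta k v (Iprime k n a i (p : ℕ)) := by
    intro p hp
    rw [Delta_Dv]
    congr 1
    funext j
    by_cases hj : j = p
    · subst hj
      rw [Function.update_self]
      unfold Iprime
      rw [if_pos rfl]
    · rw [Function.update_of_ne hj]
      have : (j : ℕ) ≠ (p : ℕ) := fun h => hj (Fin.ext h)
      simp only [hc]
      unfold Iprime
      rw [if_neg this]
  have hik' : i < k := by omega
  set pi : Fin k := ⟨i, hik'⟩ with hpi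
  have hpival : (pi : ℕ) = i := by rw [hpi]
  have hupd_i : Dv k (Function.update c pi x) = Delta k v (Iset k n a (i+1)) := by
    rw [Delta_Dv]
    congr 1
    funext j
    by_cases hj : j = pi
    · subst hj
      rw [Function.update_self]
      simp only [hx]
      unfold Iset
      rw [if_pos (by rw [hpival]; omega)]
    · rw [Function.update_of_ne hj]
      have hne : (j : ℕ) ≠ i := fun h => hj (Fin.ext (by rw [hpival, h]))
      simp only [hc]
      unfold Iset
      by_cases h1 : (j : ℕ) < i
      · rw [if_pos h1, if_pos (by omega)]
      · rw [if_neg h1, if_neg (by omega)]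
  -- split the expansion
  refine ⟨fun t => if h : t < k then Dv k (Function.update c ⟨t, h⟩ x) / Dv k c else 0, ?_⟩
  have hsplit : (Finset.univ : Finset (Fin k))
      = (Finset.univ.filter (fun p : Fin k => (p : ℕ) < i)) ∪
        {pi} ∪ (Finset.univ.filter (fun p : Fin k => i < (p : ℕ))) := by
    ext p
    simp only [Finset.mem_univ, Finset.mem_union, Finset.mem_filter, Finset.mem_singleton,
      true_and, true_iff]
    rcases lt_trichotomy ((p : ℕ)) i with h | h | h
    · exact Or.inl (Or.inl h)
    · exact Or.inl (Or.inr (Fin.ext (by rw [hpival, h])))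
    · exact Or.inr h
  have hdisj1 : Disjoint ((Finset.univ.filter (fun p : Fin k => (p : ℕ) < i)) ∪ {pi})
      (Finset.univ.filter (fun p : Fin k => i < (p : ℕ))) := by
    rw [Finset.disjoint_right]
    intro p hp hmem
    simp only [Finset.mem_filter, Finset.mem_univ, true_and] at hp
    simp only [Finset.mem_union, Finset.mem_filter, Finset.mem_univ, true_and,
      Finset.mem_singleton] at hmem
    rcases hmem with h | rfl
    · omega
    · rw [hpival] at hp; omega
  have hdisj2 : Disjoint (Finset.univ.filter (fun p : Fin k => (p : ℕ) < i)) ({pi} : Finset (Fin k)) := by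
    rw [Finset.disjoint_right]
    intro p hp hmem
    simp only [Finset.mem_singleton] at hp
    subst hp
    simp only [Finset.mem_filter, Finset.mem_univ, true_and, hpival] at hmem
    omega
  rw [hsplit, Finset.sum_union hdisj1, Finset.sum_union hdisj2] at hexp
  -- identify the first part with the uvec correction sum
  have hfirst : ∑ p ∈ Finset.univ.filter (fun p : Fin k => (p : ℕ) < i),
      (Dv k (Function.update c p x) / Dv k c) • c p
      = ∑ s ∈ Finset.range i,
        (Delta k v (Iprime k n a i s) / Delta k v (Iset k n a i)) • v (a + s) := by
    refine Finset.sum_nbij' (fun p => (p : ℕ))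
      (fun s => (⟨s % k, Nat.mod_lt _ (by omega)⟩ : Fin k)) ?_ ?_ ?_ ?_ ?_
    · intro p hp
      simp only [Finset.mem_filter, Finset.mem_univ, true_and] at hp
      simp only [Finset.mem_range]
      exact hp
    · intro s hs
      simp only [Finset.mem_range] at hs
      simp only [Finset.mem_filter, Finset.mem_univ, true_and, Fin.val_mk]
      rw [Nat.mod_eq_of_lt (by omega)]
      omega
    · intro p hp
      exact Fin.ext (by simp [Nat.mod_eq_of_lt p.isLt])
    · intro s hs
      simp only [Finset.mem_range] at hs
      simp only [Fin.val_mk]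
      exact Nat.mod_eq_of_lt (by omega)
    · intro p hp
      simp only [Finset.mem_filter, Finset.mem_univ, true_and] at hp
      rw [hupd_lt p hp, hDc]
      congr 1
      simp only [hc]
      unfold Iset
      rw [if_pos hp]
  have hsecond : ∑ p ∈ ({pi} : Finset (Fin k)),
      (Dv k (Function.update c p x) / Dv k c) • c p
      = (Delta k v (Iset k n a (i+1)) / Delta k v (Iset k n a i)) • v (n - k + 1 + i) := by
    rw [Finset.sum_singleton, hupd_i, hDc]
    congr 1
    simp only [hc]
    unfold Iset
    rw [if_neg (by rw [hpival]; omega), hpival]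
  have hthird : ∑ p ∈ Finset.univ.filter (fun p : Fin k => i < (p : ℕ)),
      (Dv k (Function.update c p x) / Dv k c) • c p
      = ∑ t ∈ Finset.Ico (i+1) k,
        (if h : t < k then Dv k (Function.update c ⟨t, h⟩ x) / Dv k c else 0) • v (n - k + 1 + t) := by
    refine Finset.sum_nbij' (fun p => (p : ℕ))
      (fun t => (⟨t % k, Nat.mod_lt _ (by omega)⟩ : Fin k)) ?_ ?_ ?_ ?_ ?_
    · intro p hp
      simp only [Finset.mem_filter, Finset.mem_univ, true_and] at hp
      simp only [Finset.mem_Ico]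
      exact ⟨by omega, p.isLt⟩
    · intro t ht
      simp only [Finset.mem_Ico] at ht
      simp only [Finset.mem_filter, Finset.mem_univ, true_and, Fin.val_mk]
      rw [Nat.mod_eq_of_lt (by omega)]
      omega
    · intro p hp
      exact Fin.ext (by simp [Nat.mod_eq_of_lt p.isLt])
    · intro t ht
      simp only [Finset.mem_Ico] at ht
      simp only [Fin.val_mk]
      exact Nat.mod_eq_of_lt (by omega)
    · intro p hp
      simp only [Finset.mem_filter, Finset.mem_univ, true_and] at hp
      rw [dif_pos p.isLt]
      have h1 : (⟨(p : ℕ), p.isLt⟩ : Fin k) = p := Fin.ext rfl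
      rw [h1]
      congr 1
      simp only [hc]
      unfold Iset
      rw [if_neg (by omega)]
  rw [hfirst, hsecond, hthird, hx] at hexp
  unfold uvec
  rw [hexp]
  abel


/-- `b = a` window: `(v_a, u_1, …, u_{k-2}, v_n)` has determinant `Δ_{I(a,k-1)}`. -/
lemma ML2 {k n a : ℕ} (v : ℕ → Fin k → ℂ) (hk : 2 ≤ k) (hkn : k ≤ n) :
    Dv k (fun p : Fin k => if (p : ℕ) = 0 then v a
      else if (p : ℕ) ≤ k - 2 then uvec k n a v (p : ℕ) else v n)
    = Delta k v (Iset k n a (k-1)) := by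
  rw [Delta_Dv]
  have h := Dv_gen (k := k)
    (fun p : Fin k => if (p : ℕ) = 0 then v a
      else if (p : ℕ) ≤ k - 2 then uvec k n a v (p : ℕ) else v n)
    (fun p : Fin k => v (Iset k n a (k-1) p))
    (fun _ => 1) (fun p => (p : ℕ))
    (fun p q h => Fin.ext h) (fun p => p.isLt) ?_
  · rw [h]
    simp
  intro p
  by_cases h0 : (p : ℕ) = 0
  · refine ⟨0, Submodule.zero_mem _, ?_⟩
    beta_reduce
    simp only [if_pos h0, one_smul, add_zero]
    unfold Iset
    rw [if_pos (by omega)]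
    exact congrArg v (by omega)
  by_cases h2 : (p : ℕ) ≤ k - 2
  · refine ⟨-∑ s ∈ Finset.range (p : ℕ),
      (Delta k v (Iprime k n a (p:ℕ) s) / Delta k v (Iset k n a (p:ℕ))) • v (a + s), ?_, ?_⟩
    · refine Submodule.neg_mem _ (Submodule.sum_mem _ fun s hs => ?_)
      simp only [Finset.mem_range] at hs
      refine Submodule.smul_mem _ _ (Submodule.subset_span ?_)
      refine ⟨⟨s, by omega⟩, by beta_reduce; simp only [Fin.val_mk]; omega, ?_⟩
      beta_reduce
      unfold Iset
      rw [if_pos (by simp only [Fin.val_mk]; omega)]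
    · beta_reduce
      rw [if_neg h0, if_pos h2, one_smul]
      unfold uvec Iset
      rw [if_pos (by omega), sub_eq_add_neg]
  · refine ⟨0, Submodule.zero_mem _, ?_⟩
    beta_reduce
    rw [if_neg h0, if_neg h2, one_smul, add_zero]
    unfold Iset
    rw [if_neg (by omega)]
    exact congrArg v (by omega)

/-- `b < a` window: front reduction to a consecutive minor. -/
lemma ML3 {k n a b : ℕ} (v : ℕ → Fin k → ℂ) (hb : b < a) :
    Dv k (fun p : Fin k => if b + (p : ℕ) ≤ a then v (b + (p : ℕ))
      else uvec k n a v (b + (p : ℕ) - a))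
    = Dv k (fun p : Fin k => v (b + (p : ℕ))) := by
  have h := Dv_gen (k := k)
    (fun p : Fin k => if b + (p : ℕ) ≤ a then v (b + (p : ℕ))
      else uvec k n a v (b + (p : ℕ) - a))
    (fun p : Fin k => v (b + (p : ℕ)))
    (fun _ => 1) (fun p => (p : ℕ))
    (fun p q h => Fin.ext h) (fun p => p.isLt) ?_
  · rw [h]; simp
  intro p
  by_cases hp : b + (p : ℕ) ≤ a
  · exact ⟨0, Submodule.zero_mem _, by beta_reduce; rw [if_pos hp, one_smul, add_zero]⟩
  · set t := b + (p : ℕ) - a with ht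
    refine ⟨-∑ s ∈ Finset.range t,
      (Delta k v (Iprime k n a t s) / Delta k v (Iset k n a t)) • v (a + s), ?_, ?_⟩
    · refine Submodule.neg_mem _ (Submodule.sum_mem _ fun s hs => ?_)
      simp only [Finset.mem_range] at hs
      refine Submodule.smul_mem _ _ (Submodule.subset_span ?_)
      refine ⟨⟨a + s - b, by omega⟩, by beta_reduce; simp only [Fin.val_mk]; omega, ?_⟩
      beta_reduce
      exact congrArg v (by simp only [Fin.val_mk]; omega)
    · beta_reduce
      rw [if_neg hp, one_smul]
      unfold uvec
      rw [sub_eq_add_neg]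
      congr 2
      omega

/-- wrapped window: tail-and-front reduction. -/
lemma ML1 {k n a i : ℕ} (v : ℕ → Fin k → ℂ) (hk : 2 ≤ k) (ha : 1 ≤ a)
    (hi1 : 1 ≤ i) (hik : i ≤ k - 1) (han : a + k ≤ n)
    (hI : ∀ j, 1 ≤ j → j ≤ k - 1 → Delta k v (Iset k n a j) ≠ 0) :
    ∃ E : ℂ, E ≠ 0 ∧
      Dv k (fun p : Fin k =>
        if (p : ℕ) + i + 1 < k then uvec k n a v (i + (p : ℕ))
        else if (p : ℕ) + i + 1 = k then v n
        else if (p : ℕ) + i + 1 ≤ k + a then v ((p : ℕ) + i + 1 - k)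
        else uvec k n a v ((p : ℕ) + i + 1 - k - a))
      = E * Dv k (fun p : Fin k =>
        if (p : ℕ) + i < k then v (n - k + 1 + i + (p : ℕ)) else v ((p : ℕ) + i + 1 - k)) := by
  classical
  set e : Fin k → ℂ := fun p => if (p : ℕ) + i + 1 < k then
      Delta k v (Iset k n a (i + (p : ℕ) + 1)) / Delta k v (Iset k n a (i + (p : ℕ)))
    else 1 with he
  refine ⟨∏ p, e p, ?_, ?_⟩
  · rw [Finset.prod_ne_zero_iff]
    intro p _
    simp only [he]
    by_cases hp : (p : ℕ) + i + 1 < k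
    · rw [if_pos hp]
      exact div_ne_zero (hI (i + (p:ℕ) + 1) (by omega) (by omega))
        (hI (i + (p:ℕ)) (by omega) (by omega))
    · rw [if_neg hp]; norm_num
  refine Dv_gen _ _ e (fun p => if (p : ℕ) + i < k then (k - 1 - i) - (p : ℕ) else (p : ℕ)) ?_ ?_ ?_
  · intro p q h
    simp only at h
    split_ifs at h <;> exact Fin.ext (by omega)
  · intro p
    split_ifs <;> omega
  intro p
  by_cases hT : (p : ℕ) + i + 1 < k
  · -- tail u-column
    obtain ⟨e', he'⟩ := uvec_tail (a := a) v (i + (p : ℕ)) hk (by omega) (by omega)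
      (hI (i + (p:ℕ)) (by omega) (by omega))
    refine ⟨∑ t ∈ Finset.Ico (i + (p : ℕ) + 1) k, e' t • v (n - k + 1 + t), ?_, ?_⟩
    · refine Submodule.sum_mem _ fun t ht => ?_
      simp only [Finset.mem_Ico] at ht
      refine Submodule.smul_mem _ _ (Submodule.subset_span ?_)
      refine ⟨⟨t - i, by omega⟩, ?_, ?_⟩
      · beta_reduce
        simp only [Fin.val_mk]
        rw [if_pos (by omega), if_pos (by omega)]
        omega
      · beta_reduce
        simp only [Fin.val_mk]
        rw [if_pos (by omega)]
        exact congrArg v (by omega)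
    · beta_reduce
      rw [if_pos hT]
      simp only [he]
      rw [if_pos hT, if_pos (by omega : (p : ℕ) + i < k)]
      rw [he']
      congr 2
      exact congrArg v (by omega)
  by_cases hV : (p : ℕ) + i + 1 = k
  · refine ⟨0, Submodule.zero_mem _, ?_⟩
    beta_reduce
    rw [if_neg hT, if_pos hV]
    simp only [he]
    rw [if_neg hT, one_smul, add_zero, if_pos (by omega : (p : ℕ) + i < k)]
    exact congrArg v (by omega)
  by_cases hM : (p : ℕ) + i + 1 ≤ k + a
  · refine ⟨0, Submodule.zero_mem _, ?_⟩
    beta_reduce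
    rw [if_neg hT, if_neg hV, if_pos hM]
    simp only [he]
    rw [if_neg hT, one_smul, add_zero, if_neg (by omega : ¬ ((p : ℕ) + i < k))]
  · -- front u-column
    set t := (p : ℕ) + i + 1 - k - a with htdef
    have ht1 : 1 ≤ t := by omega
    refine ⟨-∑ s ∈ Finset.range t,
      (Delta k v (Iprime k n a t s) / Delta k v (Iset k n a t)) • v (a + s), ?_, ?_⟩
    · refine Submodule.neg_mem _ (Submodule.sum_mem _ fun s hs => ?_)
      simp only [Finset.mem_range] at hs
      refine Submodule.smul_mem _ _ (Submodule.subset_span ?_)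
      have hq : k - 1 - i + a + s < k := by omega
      refine ⟨⟨k - 1 - i + a + s, hq⟩, ?_, ?_⟩
      · beta_reduce
        simp only [Fin.val_mk]
        rw [if_neg (by omega), if_neg (by omega)]
        omega
      · beta_reduce
        simp only [Fin.val_mk]
        rw [if_neg (by omega)]
        exact congrArg v (by omega)
    · beta_reduce
      rw [if_neg hT, if_neg hV, if_neg hM]
      simp only [he]
      rw [if_neg hT, one_smul, if_neg (by omega : ¬ ((p : ℕ) + i < k))]
      unfold uvec
      rw [sub_eq_add_neg]
      congr 2
      omega


lemma cyc_small {n b : ℕ} (h1 : 1 ≤ b) (h2 : b ≤ n) : cyc n b = b := by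
  unfold cyc
  rw [Nat.mod_eq_of_lt (by omega)]
  omega

lemma cyc_big {n b : ℕ} (h1 : n + 1 ≤ b) (h2 : b ≤ 2 * n) : cyc n b = b - n := by
  unfold cyc
  rw [Nat.mod_eq_sub_mod (by omega), Nat.mod_eq_of_lt (by omega)]
  omega

lemma rot_val {k : ℕ} [NeZero k] (t : ℕ) (ht : t < k) (j : Fin k) :
    ((Equiv.addRight ((t : ℕ) : Fin k)) j : ℕ)
      = if (j : ℕ) + t < k then (j : ℕ) + t else (j : ℕ) + t - k := by
  have hk : 0 < k := by omega
  rw [Equiv.coe_addRight, Fin.val_add, Fin.val_natCast, Nat.mod_eq_of_lt ht]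
  by_cases h : (j : ℕ) + t < k
  · rw [if_pos h, Nat.mod_eq_of_lt h]
  · rw [if_neg h, Nat.mod_eq_sub_mod (by omega), Nat.mod_eq_of_lt (by omega)]


lemma part1a (k n a : ℕ) (hk : 2 ≤ k) (h2a : 2 ≤ a) (hank : a + k ≤ n)
    (v : ℕ → Fin k → ℂ) (hv : Ua k n a v) : PiCirc k (n - a + 1) (V1col k a v) := by
  haveI : NeZero k := ⟨by omega⟩
  intro b hb1 hbm
  rw [Delta_Dv]
  by_cases hw : b + k ≤ n - a + 2
  · -- no wrap
    have ht : (fun j : Fin k => V1col k a v (cyc (n - a + 1) (b + (j : ℕ))))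
        = fun j : Fin k => v (cyc n ((a - 1 + b) + (j : ℕ))) := by
      funext j
      have hj := j.isLt
      rw [cyc_small (by omega) (by omega), cyc_small (by omega) (by omega)]
      unfold V1col
      exact congrArg v (by omega)
    rw [ht, ← Delta_Dv]
    exact hv.1 (a - 1 + b) (by omega) (by omega)
  · -- wrap
    set i := b + k - 1 - (n - a + 1) with hi
    have hi1 : 1 ≤ i := by omega
    have hik : i ≤ k - 1 := by omega
    have ht : (fun j : Fin k => V1col k a v (cyc (n - a + 1) (b + (j : ℕ))))
        = fun j : Fin k => v (Iset k n a i ((Equiv.addRight ((i : ℕ) : Fin k)) j)) := by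
      funext j
      have hj := j.isLt
      unfold V1col Iset
      rw [rot_val i (by omega) j]
      by_cases hcase : (j : ℕ) + i < k
      · rw [if_pos hcase, cyc_small (by omega) (by omega), if_neg (by omega)]
        exact congrArg v (by omega)
      · rw [if_neg hcase, cyc_big (by omega) (by omega), if_pos (by omega)]
        exact congrArg v (by omega)
    rw [ht]
    refine (Dv_perm_ne (fun j => v (Iset k n a i j)) (Equiv.addRight ((i : ℕ) : Fin k))).mpr ?_
    rw [← Delta_Dv]
    exact hv.2 i hi1 hik

lemma part1b (k n a : ℕ) (hk : 2 ≤ k) (h2a : 2 ≤ a) (hank : a + k ≤ n)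
    (v : ℕ → Fin k → ℂ) (hv : Ua k n a v) : PiCirc k (a + k - 1) (V2col k n a v) := by
  haveI : NeZero k := ⟨by omega⟩
  intro b hb1 hb2
  rw [Delta_Dv]
  rcases lt_trichotomy b a with hba | hba | hba
  · -- b < a : no wrap
    by_cases hbk : b + k - 1 ≤ a
    · -- all columns ≤ a
      have ht : (fun j : Fin k => V2col k n a v (cyc (a + k - 1) (b + (j : ℕ))))
          = fun j : Fin k => v (cyc n (b + (j : ℕ))) := by
        funext j
        have hj := j.isLt
        rw [cyc_small (by omega) (by omega), cyc_small (by omega) (by omega)]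
        unfold V2col
        rw [if_pos (by omega)]
      rw [ht, ← Delta_Dv]
      exact hv.1 b hb1 (by omega)
    · -- mixed, front reduction
      have ht : (fun j : Fin k => V2col k n a v (cyc (a + k - 1) (b + (j : ℕ))))
          = fun p : Fin k => if b + (p : ℕ) ≤ a then v (b + (p : ℕ))
              else uvec k n a v (b + (p : ℕ) - a) := by
        funext j
        have hj := j.isLt
        rw [cyc_small (by omega) (by omega)]
        unfold V2col
        by_cases hcase : b + (j : ℕ) ≤ a
        · rw [if_pos hcase, if_pos hcase]
        · rw [if_neg hcase, if_neg hcase, if_pos (by omega)]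
      rw [ht, ML3 v hba]
      have ht2 : (fun p : Fin k => v (b + (p : ℕ)))
          = fun j : Fin k => v (cyc n (b + (j : ℕ))) := by
        funext j
        have hj := j.isLt
        rw [cyc_small (by omega) (by omega)]
      rw [ht2, ← Delta_Dv]
      exact hv.1 b hb1 (by omega)
  · -- b = a
    have ht : (fun j : Fin k => V2col k n a v (cyc (a + k - 1) (b + (j : ℕ))))
        = fun p : Fin k => if (p : ℕ) = 0 then v a
            else if (p : ℕ) ≤ k - 2 then uvec k n a v (p : ℕ) else v n := by
      funext j
      have hj := j.isLt
      rw [cyc_small (n := a + k - 1) (b := b + (j : ℕ)) (by omega) (by omega)]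
      unfold V2col
      by_cases h0 : (j : ℕ) = 0
      · rw [if_pos (by omega), if_pos h0]
        exact congrArg v (by omega)
      · by_cases h2 : (j : ℕ) ≤ k - 2
        · rw [if_neg (by omega), if_pos (by omega), if_neg h0, if_pos h2]
          exact congrArg (uvec k n a v) (by omega)
        · rw [if_neg (by omega), if_neg (by omega), if_neg h0, if_neg h2]
    rw [ht, ML2 v hk (by omega)]
    exact hv.2 (k - 1) (by omega) (le_refl _)
  · -- b > a : wrap
    set i := b - a with hi
    have hi1 : 1 ≤ i := by omega
    have hik : i ≤ k - 1 := by omega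
    have ht : (fun j : Fin k => V2col k n a v (cyc (a + k - 1) (b + (j : ℕ))))
        = fun p : Fin k =>
            if (p : ℕ) + i + 1 < k then uvec k n a v (i + (p : ℕ))
            else if (p : ℕ) + i + 1 = k then v n
            else if (p : ℕ) + i + 1 ≤ k + a then v ((p : ℕ) + i + 1 - k)
            else uvec k n a v ((p : ℕ) + i + 1 - k - a) := by
      funext j
      have hj := j.isLt
      unfold V2col
      by_cases hc1 : (j : ℕ) + i + 1 < k
      · rw [cyc_small (n := a + k - 1) (b := b + (j : ℕ)) (by omega) (by omega),
          if_neg (by omega), if_pos (by omega), if_pos hc1]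
        exact congrArg (uvec k n a v) (by omega)
      · by_cases hc2 : (j : ℕ) + i + 1 = k
        · rw [cyc_small (n := a + k - 1) (b := b + (j : ℕ)) (by omega) (by omega),
            if_neg (by omega), if_neg (by omega), if_neg hc1, if_pos hc2]
        · by_cases hc3 : (j : ℕ) + i + 1 ≤ k + a
          · rw [cyc_big (n := a + k - 1) (b := b + (j : ℕ)) (by omega) (by omega),
              if_pos (by omega), if_neg hc1, if_neg hc2, if_pos hc3]
            exact congrArg v (by omega)
          · rw [cyc_big (n := a + k - 1) (b := b + (j : ℕ)) (by omega) (by omega),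
              if_neg (by omega), if_pos (by omega), if_neg hc1, if_neg hc2, if_neg hc3]
            exact congrArg (uvec k n a v) (by omega)
    rw [ht]
    obtain ⟨E, hE, heq⟩ := ML1 v hk (by omega) hi1 hik hank hv.2
    rw [heq]
    refine mul_ne_zero hE ?_
    have ht2 : (fun p : Fin k =>
        if (p : ℕ) + i < k then v (n - k + 1 + i + (p : ℕ)) else v ((p : ℕ) + i + 1 - k))
        = fun j : Fin k => v (cyc n ((n - k + 1 + i) + (j : ℕ))) := by
      funext j
      have hj := j.isLt
      by_cases hcase : (j : ℕ) + i < k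
      · rw [if_pos hcase, cyc_small (n := n) (b := n - k + 1 + i + (j : ℕ)) (by omega) (by omega)]
      · rw [if_neg hcase, cyc_big (n := n) (b := n - k + 1 + i + (j : ℕ)) (by omega) (by omega)]
        exact congrArg v (by omega)
    rw [ht2, ← Delta_Dv]
    exact hv.1 (n - k + 1 + i) (by omega) (by omega)


/-- matrix with given columns -/
def Mv (k : ℕ) (c : Fin k → Fin k → ℂ) : Matrix (Fin k) (Fin k) ℂ :=
  Matrix.of fun r p => c p r

lemma Mv_det (k : ℕ) (c : Fin k → Fin k → ℂ) : (Mv k c).det = Dv k c := rfl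

lemma mul_Mv (k : ℕ) (B : Matrix (Fin k) (Fin k) ℂ) (c : Fin k → Fin k → ℂ) :
    B * Mv k c = Mv k (fun p => B *ᵥ c p) := by
  ext r p
  simp [Mv, Matrix.mul_apply, Matrix.mulVec, dotProduct]

lemma GL_det_ne_zero {k : ℕ} (A : GL (Fin k) ℂ) : (A : Matrix (Fin k) (Fin k) ℂ).det ≠ 0 := by
  have : IsUnit (A : Matrix (Fin k) (Fin k) ℂ) := ⟨A, rfl⟩
  exact ((Matrix.isUnit_iff_isUnit_det _).mp this).ne_zero

lemma Mv_cancel {k : ℕ} (B₁ B₂ : Matrix (Fin k) (Fin k) ℂ) (c : Fin k → Fin k → ℂ)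
    (hdet : Dv k c ≠ 0) (h : B₁ * Mv k c = B₂ * Mv k c) : B₁ = B₂ := by
  have hu : IsUnit (Mv k c).det := by rw [Mv_det]; exact isUnit_iff_ne_zero.mpr hdet
  calc B₁ = B₁ * (Mv k c * (Mv k c)⁻¹) := by rw [Matrix.mul_nonsing_inv _ hu, Matrix.mul_one]
    _ = B₂ * (Mv k c * (Mv k c)⁻¹) := by rw [← Matrix.mul_assoc, h, Matrix.mul_assoc]
    _ = B₂ := by rw [Matrix.mul_nonsing_inv _ hu, Matrix.mul_one]

lemma part2 (k n a : ℕ) (hk : 2 ≤ k) (h2a : 2 ≤ a) (hank : a + k ≤ n)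
    (v v' : ℕ → Fin k → ℂ) (hv : Ua k n a v) (hv' : Ua k n a v')
    (h1 : RowEquiv k (n - a + 1) (V1col k a v) (V1col k a v'))
    (h2 : RowEquiv k (a + k - 1) (V2col k n a v) (V2col k n a v')) :
    RowEquiv k n v v' := by
  obtain ⟨A₁, hA₁⟩ := h1
  obtain ⟨A₂, hA₂⟩ := h2
  have hd₁ := GL_det_ne_zero A₁
  -- columnwise consequence of h1
  have hA₁' : ∀ m, a ≤ m → m ≤ n → v m = (A₁ : Matrix (Fin k) (Fin k) ℂ) *ᵥ v' m := by
    intro m hm1 hm2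
    have := hA₁ (m - a + 1) (by omega) (by omega)
    unfold V1col at this
    rw [show a - 1 + (m - a + 1) = m by omega] at this
    exact this
  -- the spliced column tuples
  set cols : (ℕ → Fin k → ℂ) → Fin k → Fin k → ℂ := fun x p =>
    if (p : ℕ) = 0 then x a else if (p : ℕ) ≤ k - 2 then uvec k n a x (p : ℕ) else x n
    with hcols
  have hu_eq : ∀ p : ℕ, 1 ≤ p → p ≤ k - 2 →
      uvec k n a v p = (A₁ : Matrix (Fin k) (Fin k) ℂ) *ᵥ uvec k n a v' p := by
    intro p hp1 hp2
    rw [← uvec_equivariant _ hd₁ v' p]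
    exact uvec_congr p hp2 hk hank hA₁'
  have hAcol₁ : ∀ p : Fin k, cols v p = (A₁ : Matrix (Fin k) (Fin k) ℂ) *ᵥ cols v' p := by
    intro p
    simp only [hcols]
    by_cases h0 : (p : ℕ) = 0
    · rw [if_pos h0, if_pos h0]
      exact hA₁' a (le_refl _) (by omega)
    by_cases hp2 : (p : ℕ) ≤ k - 2
    · rw [if_neg h0, if_pos hp2, if_neg h0, if_pos hp2]
      exact hu_eq _ (by omega) hp2
    · rw [if_neg h0, if_neg hp2, if_neg h0, if_neg hp2]
      exact hA₁' n (by omega) (le_refl _)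
  have hAcol₂ : ∀ p : Fin k, cols v p = (A₂ : Matrix (Fin k) (Fin k) ℂ) *ᵥ cols v' p := by
    intro p
    simp only [hcols]
    by_cases h0 : (p : ℕ) = 0
    · rw [if_pos h0, if_pos h0]
      have := hA₂ a (by omega) (by omega)
      unfold V2col at this
      rw [if_pos (le_refl a), if_pos (le_refl a)] at this
      exact this
    by_cases hp2 : (p : ℕ) ≤ k - 2
    · rw [if_neg h0, if_pos hp2, if_neg h0, if_pos hp2]
      have := hA₂ (a + (p : ℕ)) (by omega) (by omega)
      unfold V2col at this
      rw [if_neg (by omega), if_pos (by omega), if_neg (by omega), if_pos (by omega),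
        show a + (p : ℕ) - a = (p : ℕ) by omega] at this
      exact this
    · rw [if_neg h0, if_neg hp2, if_neg h0, if_neg hp2]
      have := hA₂ (a + k - 1) (by omega) (by omega)
      unfold V2col at this
      rw [if_neg (by omega), if_neg (by omega), if_neg (by omega), if_neg (by omega)] at this
      exact this
  -- A₁ = A₂ as matrices
  have hdet' : Dv k (cols v') ≠ 0 := by
    have h := ML2 (k := k) (n := n) (a := a) v' hk (by omega)
    simp only [hcols]
    rw [h]
    exact hv'.2 (k - 1) (by omega) (le_refl _)
  have hMv : ∀ B : Matrix (Fin k) (Fin k) ℂ,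
      (∀ p : Fin k, cols v p = B *ᵥ cols v' p) → B * Mv k (cols v') = Mv k (cols v) := by
    intro B hB
    rw [mul_Mv]
    unfold Mv
    congr 1
    funext r p
    exact (congrFun (hB p) r).symm
  have hAA : (A₁ : Matrix (Fin k) (Fin k) ℂ) = (A₂ : Matrix (Fin k) (Fin k) ℂ) :=
    Mv_cancel _ _ _ hdet' ((hMv _ hAcol₁).trans (hMv _ hAcol₂).symm)
  refine ⟨A₁, fun j hj1 hjn => ?_⟩
  by_cases hja : j ≤ a
  · have := hA₂ j (by omega) (by omega)
    unfold V2col at this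
    rw [if_pos hja, if_pos hja] at this
    rw [hAA]
    exact this
  · exact hA₁' j (by omega) hjn


lemma part3 (k n a : ℕ) (hk : 2 ≤ k) (h2a : 2 ≤ a) (hank : a + k ≤ n)
    (w₁ w₂ : ℕ → Fin k → ℂ)
    (hw1 : PiCirc k (n - a + 1) w₁) (hw2 : PiCirc k (a + k - 1) w₂) :
    ∃ v, Ua k n a v ∧ RowEquiv k (n - a + 1) (V1col k a v) w₁ ∧
      RowEquiv k (a + k - 1) (V2col k n a v) w₂ := by
  haveI : NeZero k := ⟨by omega⟩
  set w : ℕ → Fin k → ℂ := fun m => w₁ (m - a + 1) with hw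
  set Scols : Fin k → Fin k → ℂ := fun p =>
    if (p : ℕ) = 0 then w a else if (p : ℕ) ≤ k - 2 then uvec k n a w (p : ℕ) else w n
    with hScols
  set Tcols : Fin k → Fin k → ℂ := fun p => w₂ (a + (p : ℕ)) with hTcols
  have hSmid : ∀ q : Fin k, (q : ℕ) ≠ 0 → (q : ℕ) ≤ k - 2 →
      Scols q = uvec k n a w (q : ℕ) := by
    intro q h0 h2
    simp only [hScols]
    rw [if_neg h0, if_pos h2]
  have hSlast : ∀ q : Fin k, (q : ℕ) ≠ 0 → ¬ ((q : ℕ) ≤ k - 2) → Scols q = w n := by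
    intro q h0 h2
    simp only [hScols]
    rw [if_neg h0, if_neg h2]
  -- determinant of S
  have hdS : Dv k Scols ≠ 0 := by
    simp only [hScols]
    rw [ML2 w hk (by omega), Delta_Dv]
    have ht : (fun j : Fin k => w (Iset k n a (k-1) j))
        = fun j : Fin k => (fun j' : Fin k => w₁ (cyc (n - a + 1) ((n - a + 1) + (j' : ℕ))))
            ((Equiv.addRight ((1 : ℕ) : Fin k)) j) := by
      funext j
      have hj := j.isLt
      simp only [hw]
      unfold Iset
      rw [rot_val 1 (by omega) j]
      by_cases hcase : (j : ℕ) + 1 < k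
      · rw [if_pos hcase, if_pos (show (j : ℕ) < k - 1 by omega),
          cyc_big (n := n - a + 1) (b := (n - a + 1) + ((j : ℕ) + 1)) (by omega) (by omega)]
        exact congrArg w₁ (by omega)
      · rw [if_neg hcase, if_neg (show ¬ ((j : ℕ) < k - 1) by omega),
          cyc_small (n := n - a + 1) (b := (n - a + 1) + ((j : ℕ) + 1 - k)) (by omega) (by omega)]
        exact congrArg w₁ (by omega)
    rw [ht]
    exact (Dv_perm_ne _ _).mpr (by
      rw [← Delta_Dv]
      exact hw1 (n - a + 1) (by omega) (le_refl _))
  have hdT : Dv k Tcols ≠ 0 := by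
    have ht : Tcols = fun j : Fin k => w₂ (cyc (a + k - 1) (a + (j : ℕ))) := by
      funext j
      have hj := j.isLt
      simp only [hTcols]
      rw [cyc_small (n := a + k - 1) (b := a + (j : ℕ)) (by omega) (by omega)]
    rw [ht, ← Delta_Dv]
    exact hw2 a (by omega) (by omega)
  -- the change of basis matrix
  set S : Matrix (Fin k) (Fin k) ℂ := Mv k Scols with hS
  set T : Matrix (Fin k) (Fin k) ℂ := Mv k Tcols with hT
  have hdS' : S.det ≠ 0 := by rw [hS, Mv_det]; exact hdS
  have hdT' : T.det ≠ 0 := by rw [hT, Mv_det]; exact hdT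
  set A : Matrix (Fin k) (Fin k) ℂ := T * S⁻¹ with hA
  have hdetA : A.det ≠ 0 := by
    rw [hA, Matrix.det_mul, Matrix.det_nonsing_inv, Ring.inverse_eq_inv']
    exact mul_ne_zero hdT' (inv_ne_zero hdS')
  have hASmat : A * S = T := by
    rw [hA, Matrix.mul_assoc, Matrix.nonsing_inv_mul S (isUnit_iff_ne_zero.mpr hdS'),
      Matrix.mul_one]
  have hAS : ∀ p : Fin k, A *ᵥ Scols p = Tcols p := by
    intro p
    funext r
    have := congrFun (congrFun (congrArg (fun M => (M : Matrix (Fin k) (Fin k) ℂ)) hASmat) r) p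
    simpa [hS, hT, Mv, Matrix.mul_apply, Matrix.mulVec, dotProduct] using this
  -- the glued configuration
  set v : ℕ → Fin k → ℂ := fun j => if j ≤ a then w₂ j else A *ᵥ w j with hv
  have hS0 : Scols 0 = w a := by simp [hScols]
  have hTval : ∀ q : Fin k, Tcols q = w₂ (a + (q : ℕ)) := fun q => by simp [hTcols]
  have hT0 : Tcols 0 = w₂ a := by
    rw [hTval 0]
    exact congrArg w₂ (by simp)
  have hkey : ∀ m, a ≤ m → v m = A *ᵥ w m := by
    intro m hm
    by_cases hma : m = a
    · subst hma
      simp only [hv]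
      rw [if_pos (le_refl m), ← hT0, ← hAS 0, hS0]
    · simp only [hv]
      rw [if_neg (by omega)]
  have hu : ∀ p : ℕ, 1 ≤ p → p ≤ k - 2 → uvec k n a v p = w₂ (a + p) := by
    intro p hp1 hp2
    have h1 : uvec k n a v p = uvec k n a (fun m => A *ᵥ w m) p :=
      uvec_congr p hp2 hk hank (fun m hm _ => hkey m hm)
    have hpk : p < k := by omega
    have h2 : uvec k n a w p = Scols ⟨p, hpk⟩ := by
      rw [hSmid ⟨p, hpk⟩ (by simp only [Fin.val_mk]; omega) (by simp only [Fin.val_mk]; omega)]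
    rw [h1, uvec_equivariant _ hdetA w p, h2, hAS ⟨p, hpk⟩, hTval ⟨p, hpk⟩]
  have hvn : v n = w₂ (a + k - 1) := by
    rw [hkey n (by omega)]
    have hk1 : k - 1 < k := by omega
    have h2 : w n = Scols ⟨k - 1, hk1⟩ := by
      rw [hSlast ⟨k - 1, hk1⟩ (by simp only [Fin.val_mk]; omega) (by simp only [Fin.val_mk]; omega)]
    rw [h2, hAS ⟨k - 1, hk1⟩, hTval ⟨k - 1, hk1⟩]
    exact congrArg w₂ (by simp only [Fin.val_mk]; omega)
  -- Iset minors of v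
  have hIv : ∀ i, 1 ≤ i → i ≤ k - 1 → Delta k v (Iset k n a i) ≠ 0 := by
    intro i hi1 hik
    have h1 : Delta k v (Iset k n a i) = Delta k (fun m => A *ᵥ w m) (Iset k n a i) := by
      refine Delta_congr fun j => ?_
      rw [hkey _ (by unfold Iset; split <;> omega)]
    rw [h1, Delta_mulVec]
    refine mul_ne_zero hdetA ?_
    rw [Delta_Dv]
    have ht : (fun j : Fin k => w (Iset k n a i j))
        = fun j : Fin k => (fun j' : Fin k => w₁ (cyc (n - a + 1) ((n - a + 1 - k + 1 + i) + (j' : ℕ))))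
            ((Equiv.addRight (((k - i : ℕ)) : Fin k)) j) := by
      funext j
      have hj := j.isLt
      simp only [hw]
      unfold Iset
      rw [rot_val (k - i) (by omega) j]
      by_cases hcase : (j : ℕ) < i
      · rw [if_pos hcase, if_pos (show (j : ℕ) + (k - i) < k by omega),
          cyc_big (n := n - a + 1) (b := (n - a + 1 - k + 1 + i) + ((j : ℕ) + (k - i)))
            (by omega) (by omega)]
        exact congrArg w₁ (by omega)
      · rw [if_neg hcase, if_neg (show ¬ ((j : ℕ) + (k - i) < k) by omega),
          cyc_small (n := n - a + 1) (b := (n - a + 1 - k + 1 + i) + ((j : ℕ) + (k - i) - k))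
            (by omega) (by omega)]
        exact congrArg w₁ (by omega)
    rw [ht]
    exact (Dv_perm_ne _ _).mpr (by
      rw [← Delta_Dv]
      exact hw1 (n - a + 1 - k + 1 + i) (by omega) (by omega))
  -- PiCirc for v
  have hPC : PiCirc k n v := by
    intro b hb1 hbn
    rw [Delta_Dv]
    by_cases hA1 : b + k - 1 ≤ a
    · -- all left
      have ht : (fun j : Fin k => v (cyc n (b + (j : ℕ))))
          = fun j : Fin k => w₂ (cyc (a + k - 1) (b + (j : ℕ))) := by
        funext j
        have hj := j.isLt
        rw [cyc_small (n := n) (b := b + (j : ℕ)) (by omega) (by omega),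
          cyc_small (n := a + k - 1) (b := b + (j : ℕ)) (by omega) (by omega)]
        simp only [hv]
        rw [if_pos (by omega)]
      rw [ht, ← Delta_Dv]
      exact hw2 b hb1 (by omega)
    by_cases hB1 : b < a
    · -- junction at a
      have ht : (fun j : Fin k => v (cyc n (b + (j : ℕ))))
          = fun p : Fin k => v (b + (p : ℕ)) := by
        funext j
        have hj := j.isLt
        rw [cyc_small (n := n) (b := b + (j : ℕ)) (by omega) (by omega)]
      rw [ht, ← ML3 (n := n) v hB1]
      have ht2 : (fun p : Fin k => if b + (p : ℕ) ≤ a then v (b + (p : ℕ))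
            else uvec k n a v (b + (p : ℕ) - a))
          = fun j : Fin k => w₂ (cyc (a + k - 1) (b + (j : ℕ))) := by
        funext j
        have hj := j.isLt
        rw [cyc_small (n := a + k - 1) (b := b + (j : ℕ)) (by omega) (by omega)]
        by_cases hcase : b + (j : ℕ) ≤ a
        · rw [if_pos hcase]
          simp only [hv]
          rw [if_pos hcase]
        · rw [if_neg hcase, hu (b + (j : ℕ) - a) (by omega) (by omega)]
          exact congrArg w₂ (by omega)
      rw [ht2, ← Delta_Dv]
      exact hw2 b hb1 (by omega)
    by_cases hC1 : b + k - 1 ≤ n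
    · -- all right
      have ht : (fun j : Fin k => v (cyc n (b + (j : ℕ))))
          = fun j : Fin k => A *ᵥ w (b + (j : ℕ)) := by
        funext j
        have hj := j.isLt
        rw [cyc_small (n := n) (b := b + (j : ℕ)) (by omega) (by omega)]
        exact hkey _ (by omega)
      have hDD : Dv k (fun j : Fin k => A *ᵥ w (b + (j : ℕ)))
          = Delta k (fun m => A *ᵥ w m) (fun j : Fin k => b + (j : ℕ)) :=
        (Delta_Dv k (fun m => A *ᵥ w m) (fun j : Fin k => b + (j : ℕ))).symm
      rw [ht, hDD, Delta_mulVec]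
      refine mul_ne_zero hdetA ?_
      rw [Delta_Dv]
      have ht2 : (fun j : Fin k => w (b + (j : ℕ)))
          = fun j : Fin k => w₁ (cyc (n - a + 1) ((b - a + 1) + (j : ℕ))) := by
        funext j
        have hj := j.isLt
        simp only [hw]
        rw [cyc_small (n := n - a + 1) (b := (b - a + 1) + (j : ℕ)) (by omega) (by omega)]
        exact congrArg w₁ (by omega)
      rw [ht2, ← Delta_Dv]
      exact hw1 (b - a + 1) (by omega) (by omega)
    · -- wrap around n
      set i := b + k - 1 - n with hidef
      have hi1 : 1 ≤ i := by omega
      have hik : i ≤ k - 1 := by omega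
      obtain ⟨E, hE, heq⟩ := ML1 v hk (by omega) hi1 hik hank hIv
      have ht : (fun j : Fin k => v (cyc n (b + (j : ℕ))))
          = fun p : Fin k => if (p : ℕ) + i < k then v (n - k + 1 + i + (p : ℕ))
              else v ((p : ℕ) + i + 1 - k) := by
        funext j
        have hj := j.isLt
        by_cases hcase : (j : ℕ) + i < k
        · rw [if_pos hcase, cyc_small (n := n) (b := b + (j : ℕ)) (by omega) (by omega)]
          exact congrArg v (by omega)
        · rw [if_neg hcase, cyc_big (n := n) (b := b + (j : ℕ)) (by omega) (by omega)]
          exact congrArg v (by omega)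
      rw [ht]
      intro h0
      rw [h0, mul_zero] at heq
      -- the left side of heq is a cyclic minor of w₂, nonzero
      have hc : Dv k (fun p : Fin k =>
          if (p : ℕ) + i + 1 < k then uvec k n a v (i + (p : ℕ))
          else if (p : ℕ) + i + 1 = k then v n
          else if (p : ℕ) + i + 1 ≤ k + a then v ((p : ℕ) + i + 1 - k)
          else uvec k n a v ((p : ℕ) + i + 1 - k - a)) ≠ 0 := by
        have ht2 : (fun p : Fin k =>
            if (p : ℕ) + i + 1 < k then uvec k n a v (i + (p : ℕ))
            else if (p : ℕ) + i + 1 = k then v n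
            else if (p : ℕ) + i + 1 ≤ k + a then v ((p : ℕ) + i + 1 - k)
            else uvec k n a v ((p : ℕ) + i + 1 - k - a))
            = fun j : Fin k => w₂ (cyc (a + k - 1) ((a + i) + (j : ℕ))) := by
          funext j
          have hj := j.isLt
          by_cases hc1 : (j : ℕ) + i + 1 < k
          · rw [if_pos hc1, cyc_small (n := a + k - 1) (b := (a + i) + (j : ℕ)) (by omega) (by omega),
              hu (i + (j : ℕ)) (by omega) (by omega)]
            exact congrArg w₂ (by omega)
          by_cases hc2 : (j : ℕ) + i + 1 = k
          · rw [if_neg hc1, if_pos hc2,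
              cyc_small (n := a + k - 1) (b := (a + i) + (j : ℕ)) (by omega) (by omega), hvn]
            exact congrArg w₂ (by omega)
          by_cases hc3 : (j : ℕ) + i + 1 ≤ k + a
          · rw [if_neg hc1, if_neg hc2, if_pos hc3,
              cyc_big (n := a + k - 1) (b := (a + i) + (j : ℕ)) (by omega) (by omega)]
            simp only [hv]
            rw [if_pos (by omega)]
            exact congrArg w₂ (by omega)
          · rw [if_neg hc1, if_neg hc2, if_neg hc3,
              cyc_big (n := a + k - 1) (b := (a + i) + (j : ℕ)) (by omega) (by omega),
              hu ((j : ℕ) + i + 1 - k - a) (by omega) (by omega)]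
            exact congrArg w₂ (by omega)
        rw [ht2, ← Delta_Dv]
        exact hw2 (a + i) (by omega) (by omega)
      exact hc heq
  -- assemble
  set AGL : GL (Fin k) ℂ := Matrix.GeneralLinearGroup.mkOfDetNeZero A hdetA with hAGL
  have hAGLcoe : (AGL : Matrix (Fin k) (Fin k) ℂ) = A := rfl
  refine ⟨v, ⟨hPC, hIv⟩, ⟨AGL, fun j hj1 hj2 => ?_⟩, ⟨1, fun j hj1 hj2 => ?_⟩⟩
  · -- V1 row equivalence
    rw [hAGLcoe]
    unfold V1col
    rw [hkey (a - 1 + j) (by omega)]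
    simp only [hw]
    exact congrArg (fun m => A *ᵥ w₁ m) (by omega)
  · -- V2 row equivalence
    rw [Units.val_one, Matrix.one_mulVec]
    unfold V2col
    by_cases hja : j ≤ a
    · rw [if_pos hja]
      simp only [hv]
      rw [if_pos hja]
    by_cases hjk : j ≤ a + k - 2
    · rw [if_neg hja, if_pos hjk, hu (j - a) (by omega) (by omega)]
      exact congrArg w₂ (by omega)
    · rw [if_neg hja, if_neg hjk, hvn]
      exact congrArg w₂ (by omega)


/-- The map `Φ_a : V ↦ (V₁, V₂)` is a bijection from `U_a` modulo row operations onto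
`Π°_{k,n-a+1} × Π°_{k,a+k-1}` modulo row operations: it is well defined, injective up to row
equivalence, and surjective up to row equivalence. -/
theorem Phi_bijection (k n a : ℕ)
    (hk : 2 ≤ k) (h2a : 2 ≤ a) (han : a ≤ n - k) (hkn : k ≤ n) :
    (∀ v, Ua k n a v →
      PiCirc k (n - a + 1) (V1col k a v) ∧ PiCirc k (a + k - 1) (V2col k n a v)) ∧
    (∀ v v', Ua k n a v → Ua k n a v' →
      RowEquiv k (n - a + 1) (V1col k a v) (V1col k a v') →
      RowEquiv k (a + k - 1) (V2col k n a v) (V2col k n a v') →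
      RowEquiv k n v v') ∧
    (∀ w₁ w₂, PiCirc k (n - a + 1) w₁ → PiCirc k (a + k - 1) w₂ →
      ∃ v, Ua k n a v ∧ RowEquiv k (n - a + 1) (V1col k a v) w₁ ∧
        RowEquiv k (a + k - 1) (V2col k n a v) w₂) := by
  have hank : a + k ≤ n := by omega
  exact ⟨fun v hv => ⟨part1a k n a hk h2a hank v hv, part1b k n a hk h2a hank v hv⟩,
    fun v v' hv hv' h1 h2 => part2 k n a hk h2a hank v v' hv hv' h1 h2,
    fun w₁ w₂ hw1 hw2 => part3 k n a hk h2a hank w₁ w₂ hw1 hw2⟩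
end
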